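/- arXiv:1709.08356 — 4 statements merged into one kernel-verified Lean document; each statement's English description precedes it below -/
import Mathlib

section
/- Let n ≥ 0 be an integer and K a totally real number field of degree 2^n over ℚ such that: (i) 2 is totally ramified in K; (ii) the class number of K is 1 and every totally positive unit of O_K is a square in O_K (equivalently, the narrow class number of K is 1). Then K is isomorphic to ℚ(μ_{2^{n+2}})⁺, the maximal totally real subfield of the cyclotomic field of 2^{n+2}-th roots of unity, i.e. K ≅ ℚ(ζ + ζ⁻¹) where ζ is a primitive 2^{n+2}-th root of unity. -/
/-!
The polynomials `Pₖ = C_{2^k}` (Chebyshev polynomials normalized by `Cₘ(z + z⁻¹) = zᵐ + z⁻ᵐ`)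
satisfy `Pₖ₊₁ = Pₖ(X² - 2)`. `Pₙ` is Eisenstein at `2`, hence irreducible of degree `2ⁿ`, and
`ζ + ζ⁻¹` is a root of it, so it suffices to find a root of `Pₙ` in `𝓞 K`.

Starting from `a = 0`, where `(2 + a) = (2 - a) = 𝓛^(2ⁿ)`, climb the tower: if `Pₖ(a) = 0` and
`(2 ± a) = 𝓛^(2m)`, the real conjugates of `a` lie in `(-2, 2)`, so `2 + a` is totally positive.
As `𝓞 K` is principal, `2 + a = π^(2m) u` with `u` a totally positive unit, hence a square, so
`2 + a = b²`. Then `(2 + b)(2 - b) = 2 - a` with both factors in `𝓛ᵐ`, forcing `(2 ± b) = 𝓛ᵐ`,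
and `Pₖ₊₁(b) = Pₖ(a) = 0`.
-/
open NumberField Polynomial

namespace Polynomial.Chebyshev

section CommRing

variable (R : Type*) [CommRing R]

theorem C_two_pow_succ (k : ℕ) :
    C R (2 ^ (k + 1)) = (C R (2 ^ k)).comp (X ^ 2 - Polynomial.C 2) := by
  rw [pow_succ, C_mul, C_two, map_ofNat]

theorem eval_C_two_pow_succ (k : ℕ) (x : R) :
    (C R (2 ^ (k + 1))).eval x = (C R (2 ^ k)).eval (x ^ 2 - 2) := by
  simp [C_two_pow_succ]

theorem monic_C_two_pow [Nontrivial R] (k : ℕ) : (C R (2 ^ k)).Monic := by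
  induction k with
  | zero => simp
  | succ k ih =>
    rw [C_two_pow_succ]
    exact ih.comp (monic_X_pow_sub_C 2 two_ne_zero) (by simp)

theorem natDegree_C_two_pow [Nontrivial R] [NoZeroDivisors R] (k : ℕ) :
    (C R (2 ^ k)).natDegree = 2 ^ k := by
  induction k with
  | zero => simp
  | succ k ih =>
    rw [C_two_pow_succ, natDegree_comp, ih, natDegree_X_pow_sub_C, pow_succ]

theorem C_two_pow_of_charP_two [CharP R 2] (k : ℕ) : C R (2 ^ k) = X ^ 2 ^ k := by
  induction k with
  | zero => simp
  | succ k ih =>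
    rw [C_two_pow_succ, ih, X_pow_comp, CharTwo.two_eq_zero (R := R), map_zero, sub_zero,
      ← pow_mul, ← pow_succ']

theorem eval_zero_C_two_pow_succ (k : ℕ) :
    (C R (2 ^ (k + 1))).eval 0 = 2 * ((2 ^ k : ℤ).negOnePow : ℤ) := by
  rw [eval_C_two_pow_succ]
  simp [C_eval_neg_two]

end CommRing

section Ordered

variable {R : Type*} [CommRing R] [LinearOrder R] [IsStrictOrderedRing R]

theorem two_le_eval_C_two_pow {x : R} (hx : 2 ≤ x) (k : ℕ) : 2 ≤ (C R (2 ^ k)).eval x := by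
  induction k generalizing x with
  | zero => simpa using hx
  | succ k ih =>
    rw [eval_C_two_pow_succ]
    exact ih (by nlinarith)

theorem abs_lt_two_of_eval_C_two_pow_eq_zero {x : R} {k : ℕ} (h : (C R (2 ^ k)).eval x = 0) :
    |x| < 2 := by
  by_contra! hx
  rcases k with _ | k
  · simp only [pow_zero, C_one, eval_X] at h
    simp [h] at hx
    linarith
  · rw [eval_C_two_pow_succ] at h
    have := two_le_eval_C_two_pow (x := x ^ 2 - 2) (by nlinarith [sq_abs x, abs_nonneg x]) k
    linarith

end Ordered

theorem eval_C_two_pow_add_inv_eq_zero {L : Type*} [Field L] {k : ℕ} {z : L}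
    (hz : z ^ 2 ^ (k + 1) = -1) : (C L (2 ^ k)).eval (z + z⁻¹) = 0 := by
  have hz0 : z ≠ 0 := by rintro rfl; simp at hz
  have hw : (z ^ 2 ^ k) ^ 2 = -1 := by rw [← pow_mul, ← pow_succ, hz]
  have hw0 : z ^ 2 ^ k ≠ 0 := pow_ne_zero _ hz0
  have h := dickson_one_one_eval_add_inv z z⁻¹ (mul_inv_cancel₀ hz0) (2 ^ k)
  rw [dickson_one_one_eq_chebyshev_C, inv_pow] at h
  push_cast at h
  rw [h]
  field_simp
  linear_combination hw

theorem irreducible_C_two_pow_succ_int (k : ℕ) : Irreducible (C ℤ (2 ^ (k + 1))) := by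
  have hmod : (C ℤ (2 ^ (k + 1))).map (Int.castRingHom (ZMod 2)) = X ^ 2 ^ (k + 1) := by
    rw [map_C, C_two_pow_of_charP_two]
  refine irreducible_of_eisenstein_criterion ((Ideal.span_singleton_prime two_ne_zero).mpr
    Int.prime_two) ?_ ?_ ?_ ?_ (monic_C_two_pow ℤ _).isPrimitive
  · rw [(monic_C_two_pow ℤ _).leadingCoeff, Ideal.mem_span_singleton]
    norm_num
  · intro i hi
    rw [degree_eq_natDegree (monic_C_two_pow ℤ _).ne_zero, natDegree_C_two_pow,
      Nat.cast_lt] at hi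
    have := congrArg (coeff · i) hmod
    simp only [coeff_map, coeff_X_pow, if_neg hi.ne, eq_intCast] at this
    rw [Ideal.mem_span_singleton]
    exact (ZMod.intCast_zmod_eq_zero_iff_dvd _ 2).mp this
  · rw [degree_eq_natDegree (monic_C_two_pow ℤ _).ne_zero, natDegree_C_two_pow]
    exact_mod_cast pow_pos two_pos _
  · rw [coeff_zero_eq_eval_zero, eval_zero_C_two_pow_succ, Ideal.span_singleton_pow,
      Ideal.mem_span_singleton]
    rcases Int.units_eq_one_or (2 ^ k : ℤ).negOnePow with h | h <;> rw [h] <;> decide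

theorem irreducible_C_two_pow_rat (k : ℕ) : Irreducible (C ℚ (2 ^ k)) := by
  rcases k with _ | k
  · simpa using irreducible_X
  · rw [← map_C (Int.castRingHom ℚ)]
    exact (IsPrimitive.Int.irreducible_iff_irreducible_map_cast
      (monic_C_two_pow ℤ _).isPrimitive).mp (irreducible_C_two_pow_succ_int k)

theorem minpoly_eq_C_two_pow {L : Type*} [Field L] [Algebra ℚ L] {k : ℕ} {x : L}
    (hx : (C L (2 ^ k)).eval x = 0) : minpoly ℚ x = C ℚ (2 ^ k) :=
  (minpoly.eq_of_irreducible_of_monic (irreducible_C_two_pow_rat k) (by rwa [aeval_C])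
    (monic_C_two_pow ℚ k)).symm

end Polynomial.Chebyshev

open Polynomial.Chebyshev IntermediateField

theorem IsPrimitiveRoot.pow_two_pow_eq_neg_one {R : Type*} [CommRing R] [NoZeroDivisors R] {ζ : R}
    {k : ℕ} (hζ : IsPrimitiveRoot ζ (2 ^ (k + 1))) : ζ ^ 2 ^ k = -1 := by
  refine IsPrimitiveRoot.eq_neg_one_of_two_right ?_
  simpa [pow_succ] using hζ.pow_of_dvd (p := 2 ^ k) (by positivity) (pow_dvd_pow 2 k.le_succ)

theorem nonempty_algEquiv_adjoin_of_minpoly_eq {F K L : Type*} [Field F] [Field K] [CommRing L]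
    [Algebra F K] [Algebra F L] [FiniteDimensional F K] {α : K} {β : L}
    (hmin : minpoly F α = minpoly F β) (hrank : (minpoly F α).natDegree = Module.finrank F K) :
    Nonempty (K ≃ₐ[F] Algebra.adjoin F {β}) := by
  have hα : IsIntegral F α := .of_finite F α
  have hβ : IsIntegral F β := by
    by_contra h
    exact minpoly.ne_zero hα (hmin.trans (minpoly.eq_zero h))
  have htop : F⟮α⟯ = ⊤ := (Field.primitive_element_iff_minpoly_natDegree_eq F α).mpr hrank
  have hgen : minpoly F (adjoin.powerBasis hα).gen =
      minpoly F (Algebra.adjoin.powerBasis hβ).gen := by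
    rw [adjoin.powerBasis_gen, minpoly_gen, Algebra.adjoin.powerBasis_gen, hmin]
    exact minpoly.algHom_eq (Algebra.adjoin F {β}).val Subtype.val_injective
      ⟨β, Algebra.self_mem_adjoin_singleton F β⟩
  exact ⟨topEquiv.symm.trans <| (equivOfEq htop.symm).trans <|
    (adjoin.powerBasis hα).equivOfMinpoly _ hgen⟩

theorem Ideal.eq_of_le_of_mul_eq_sq {R : Type*} [CommRing R] [IsDedekindDomain R]
    {A B J : Ideal R} (hJ : J ≠ ⊥) (hA : A ≤ J) (hB : B ≤ J) (h : A * B = J ^ 2) : A = J := by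
  refine mul_right_cancel₀ hJ (le_antisymm (Ideal.mul_mono_left hA) ?_)
  rw [← sq, ← h]
  exact Ideal.mul_mono_right hB

section NarrowClassNumberOne

variable {K : Type*} [Field K]

def IsTotallyPositive (x : 𝓞 K) : Prop := ∀ σ : K →+* ℝ, 0 < σ (algebraMap (𝓞 K) K x)

variable (K) in
def TotallyPositiveUnitsAreSquares : Prop :=
  ∀ u : (𝓞 K)ˣ, IsTotallyPositive (u : 𝓞 K) → ∃ w : 𝓞 K, (u : 𝓞 K) = w ^ 2

theorem exists_sq_eq_and_span_eq_of_span_eq_sq [IsPrincipalIdealRing (𝓞 K)]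
    (hsq : TotallyPositiveUnitsAreSquares K)
    {x : 𝓞 K} (hx : IsTotallyPositive x)
    {J : Ideal (𝓞 K)} (hJ : Ideal.span {x} = J ^ 2) :
    ∃ b : 𝓞 K, b ^ 2 = x ∧ Ideal.span {b} = J := by
  obtain ⟨π, rfl⟩ : ∃ π, J = Ideal.span {π} :=
    ⟨_, (Submodule.IsPrincipal.span_singleton_generator J).symm⟩
  obtain ⟨u, hu⟩ : Associated (π ^ 2) x := by
    rwa [← Ideal.span_singleton_eq_span_singleton, ← Ideal.span_singleton_pow, eq_comm]
  have hu_pos : IsTotallyPositive (u : 𝓞 K) := fun σ => by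
    have := hx σ
    rw [← hu, map_mul, map_mul, map_pow, map_pow] at this
    exact pos_of_mul_pos_right this (sq_nonneg _)
  obtain ⟨w, hw⟩ := hsq u hu_pos
  have hw_unit : IsUnit w := isUnit_of_dvd_unit ⟨w, by rw [hw, sq]⟩ u.isUnit
  exact ⟨π * w, by rw [mul_pow, ← hw, hu], Ideal.span_singleton_mul_right_unit hw_unit π⟩

theorem isTotallyPositive_two_add_of_eval_C_two_pow_eq_zero {k : ℕ} {a : 𝓞 K}
    (ha : (C (𝓞 K) (2 ^ k)).eval a = 0) : IsTotallyPositive (2 + a) := fun σ => by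
  let f := σ.comp (algebraMap (𝓞 K) K)
  have hroot : (C ℝ (2 ^ k)).eval (f a) = 0 := by
    rw [← Chebyshev.map_C f, eval_map_apply, ha, map_zero]
  have hbound := abs_lt_two_of_eval_C_two_pow_eq_zero hroot
  change 0 < f (2 + a)
  rw [map_add, map_ofNat]
  linarith [(abs_lt.mp hbound).1]

variable [NumberField K] [IsPrincipalIdealRing (𝓞 K)]

theorem exists_sq_eq_two_add_of_span_eq
    (hsq : TotallyPositiveUnitsAreSquares K)
    {J : Ideal (𝓞 K)} (hJ : J ≠ ⊥) (h2 : (2 : 𝓞 K) ∈ J) {a : 𝓞 K}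
    (ha : IsTotallyPositive (2 + a)) (hplus : Ideal.span {2 + a} = J ^ 2)
    (hminus : Ideal.span {2 - a} = J ^ 2) :
    ∃ b : 𝓞 K, b ^ 2 = 2 + a ∧ Ideal.span {2 + b} = J ∧ Ideal.span {2 - b} = J := by
  obtain ⟨b, hb, hbJ⟩ := exists_sq_eq_and_span_eq_of_span_eq_sq hsq ha hplus
  have hb_mem : b ∈ J := hbJ ▸ Ideal.mem_span_singleton_self b
  have hplus_le : Ideal.span {2 + b} ≤ J := (Ideal.span_singleton_le_iff_mem J).mpr
    (add_mem h2 hb_mem)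
  have hminus_le : Ideal.span {2 - b} ≤ J := (Ideal.span_singleton_le_iff_mem J).mpr
    (sub_mem h2 hb_mem)
  have hprod : Ideal.span {2 + b} * Ideal.span {2 - b} = J ^ 2 := by
    rw [Ideal.span_singleton_mul_span_singleton, ← hminus]
    congr 2
    linear_combination -hb
  exact ⟨b, hb, Ideal.eq_of_le_of_mul_eq_sq hJ hplus_le hminus_le hprod,
    Ideal.eq_of_le_of_mul_eq_sq hJ hminus_le hplus_le (mul_comm (Ideal.span {2 + b}) _ ▸ hprod)⟩

theorem exists_eval_C_two_pow_eq_zero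
    (hsq : TotallyPositiveUnitsAreSquares K)
    {𝓛 : Ideal (𝓞 K)} (k j : ℕ) (hram : Ideal.span {(2 : 𝓞 K)} = 𝓛 ^ 2 ^ (k + j)) :
    ∃ a : 𝓞 K, (C (𝓞 K) (2 ^ k)).eval a = 0 ∧
      Ideal.span {2 + a} = 𝓛 ^ 2 ^ j ∧ Ideal.span {2 - a} = 𝓛 ^ 2 ^ j := by
  induction k generalizing j with
  | zero => exact ⟨0, by simp, by simpa using hram, by simpa using hram⟩
  | succ k ih =>
    obtain ⟨a, ha, hplus, hminus⟩ := ih (j + 1) (by rw [hram, add_right_comm, add_assoc])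
    have h𝓛 : 𝓛 ≠ ⊥ := by
      rintro rfl
      simp at hram
    have h2 : (2 : 𝓞 K) ∈ 𝓛 ^ 2 ^ j :=
      Ideal.pow_le_pow_right (Nat.pow_le_pow_right two_pos (by omega))
        (hram ▸ Ideal.mem_span_singleton_self 2)
    have hsq_pow : 𝓛 ^ 2 ^ (j + 1) = (𝓛 ^ 2 ^ j) ^ 2 := by rw [pow_succ, pow_mul]
    obtain ⟨b, hb, hplus', hminus'⟩ := exists_sq_eq_two_add_of_span_eq hsq
      (pow_ne_zero _ h𝓛) h2 (isTotallyPositive_two_add_of_eval_C_two_pow_eq_zero ha)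
      (hplus.trans hsq_pow) (hminus.trans hsq_pow)
    refine ⟨b, ?_, hplus', hminus'⟩
    rw [eval_C_two_pow_succ, hb, add_sub_cancel_left, ha]

end NarrowClassNumberOne

theorem eq_maximal_real_subfield_of_two_totally_ramified_of_narrow_class_number_one_general
    (n : ℕ) (K : Type*) [Field K] [NumberField K]
    (hdeg : Module.finrank ℚ K = 2 ^ n)
    (𝓛 : Ideal (𝓞 K))
    (hram : Ideal.span {(2 : 𝓞 K)} = 𝓛 ^ (2 ^ n))
    (hclass : NumberField.classNumber K = 1)
    (hpos : ∀ u : (𝓞 K)ˣ,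
      (∀ σ : K →+* ℝ, 0 < σ (algebraMap (𝓞 K) K u)) → ∃ w : 𝓞 K, (u : 𝓞 K) = w ^ 2) :
    ∀ ζ : CyclotomicField (2 ^ (n + 2) : ℕ+) ℚ, IsPrimitiveRoot ζ (2 ^ (n + 2)) →
      Nonempty (K ≃+* (Algebra.adjoin ℚ {ζ + ζ⁻¹} :
        Subalgebra ℚ (CyclotomicField (2 ^ (n + 2) : ℕ+) ℚ))) := by
  intro ζ hζ
  have := classNumber_eq_one_iff.mp hclass
  obtain ⟨a, ha, -⟩ := exists_eval_C_two_pow_eq_zero hpos n 0 hram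
  have hα : minpoly ℚ (algebraMap (𝓞 K) K a) = C ℚ (2 ^ n) :=
    minpoly_eq_C_two_pow (by rw [← algebraMap_eval_C, ha, map_zero])
  have hβ : minpoly ℚ (ζ + ζ⁻¹) = C ℚ (2 ^ n) :=
    minpoly_eq_C_two_pow (eval_C_two_pow_add_inv_eq_zero hζ.pow_two_pow_eq_neg_one)
  obtain ⟨e⟩ := nonempty_algEquiv_adjoin_of_minpoly_eq (hα.trans hβ.symm)
    (by rw [hα, natDegree_C_two_pow, hdeg])
  exact ⟨e.toRingEquiv⟩

/-- **Theorem 5 of Kraus' paper.**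
Let `n ≥ 0` and let `K` be a totally real number field of degree `2 ^ n` over `ℚ` such
that `2` is totally ramified in `K`, the class number of `K` is `1` and every totally
positive unit of `𝓞 K` is a square (i.e. the narrow class number of `K` is `1`).  Then
`K` is isomorphic to `ℚ(μ_{2^{n+2}})⁺ = ℚ(ζ + ζ⁻¹)`, the maximal totally real subfield
of the cyclotomic field of `2 ^ (n + 2)`-th roots of unity. -/
theorem eq_maximal_real_subfield_of_two_totally_ramified_of_narrow_class_number_one
    (n : ℕ) (K : Type*) [Field K] [NumberField K]
    (htotreal : ∀ φ : K →+* ℂ, ∀ x : K, (φ x).im = 0)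
    (hdeg : Module.finrank ℚ K = 2 ^ n)
    (𝓛 : Ideal (𝓞 K)) (h𝓛 : 𝓛.IsMaximal)
    (hram : Ideal.span {(2 : 𝓞 K)} = 𝓛 ^ (2 ^ n))
    (hclass : NumberField.classNumber K = 1)
    (hpos : ∀ u : (𝓞 K)ˣ,
      (∀ σ : K →+* ℝ, 0 < σ (algebraMap (𝓞 K) K u)) → ∃ w : 𝓞 K, (u : 𝓞 K) = w ^ 2) :
    ∀ ζ : CyclotomicField (2 ^ (n + 2) : ℕ+) ℚ, IsPrimitiveRoot ζ (2 ^ (n + 2)) →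
      Nonempty (K ≃+* (Algebra.adjoin ℚ {ζ + ζ⁻¹} :
        Subalgebra ℚ (CyclotomicField (2 ^ (n + 2) : ℕ+) ℚ))) :=
  eq_maximal_real_subfield_of_two_totally_ramified_of_narrow_class_number_one_general n K hdeg 𝓛
    hram hclass hpos
end

section
/- Let K be a totally real number field of degree d over ℚ in which 2 is totally ramified, and set G = (O_K/4O_K)ˣ. Then the quotient group G/G² has order 2^d, where G² denotes the subgroup of squares of G. -/
/-!
In a finite abelian group the quotient by the squares has the order of the kernel of squaring,
so it suffices to show that the square roots of `1` in `𝓞 K / 4` are exactly the classes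
`1 + j` with `j ∈ 2𝓞 K / 4𝓞 K`, a group of order `|𝓞 K / 2| = 2 ^ d`. Since `(2𝓞 K)² = 4𝓞 K`,
each `1 + j` squares to `1`. Conversely, if `x² ≡ 1 mod 4` then `(x - 1)(x + 1) ∈ 𝓛 ^ (2d)`,
and as the two factors differ by `2`, whose `𝓛`-adic valuation is `d`, either both have
valuation `≥ d` or they have the same valuation `< d`; the latter is impossible.
-/

open NumberField IsDedekindDomain

theorem IsDedekindDomain.HeightOneSpectrum.mem_pow_of_mul_mem_pow_two_mul_of_sub_mem
    {R : Type*} [CommRing R] [IsDedekindDomain R] (v : HeightOneSpectrum R) {a b : R} {n : ℕ}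
    (hsub : a - b ∈ v.asIdeal ^ n) (hmul : a * b ∈ v.asIdeal ^ (2 * n)) :
    a ∈ v.asIdeal ^ n := by
  rw [← intValuation_le_pow_iff_mem] at hsub hmul ⊢
  by_contra! ha
  have hb : v.intValuation b = v.intValuation a := by
    simpa using Valuation.map_sub_eq_of_lt_left _ (hsub.trans_lt ha)
  have hlt : WithZero.exp (-(n : ℤ)) * WithZero.exp (-(n : ℤ)) <
      v.intValuation a * v.intValuation b := by
    rw [hb]
    exact mul_lt_mul'' ha ha zero_le zero_le
  rw [← map_mul, ← WithZero.exp_add] at hlt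
  exact hlt.not_ge (by simpa [two_mul, neg_add] using hmul)

theorem sub_one_mem_span_two_of_sq_sub_one_mem_span_four {R : Type*} [CommRing R]
    [IsDedekindDomain R] (v : HeightOneSpectrum R) {d : ℕ}
    (hram : Ideal.span {(2 : R)} = v.asIdeal ^ d) {x : R}
    (hx : x ^ 2 - 1 ∈ Ideal.span {(4 : R)}) : x - 1 ∈ Ideal.span {(2 : R)} := by
  have hfour : Ideal.span {(4 : R)} = v.asIdeal ^ (2 * d) := by
    rw [two_mul, pow_add, ← hram, Ideal.span_singleton_mul_span_singleton]
    norm_num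
  rw [hram]
  refine v.mem_pow_of_mul_mem_pow_two_mul_of_sub_mem (b := x + 1) ?_ ?_
  · rw [← hram, Ideal.mem_span_singleton]
    exact ⟨-1, by ring⟩
  · rw [← hfour]
    convert hx using 1
    ring

theorem Ideal.card_quotient_eq_card_quotient_mul_card_map {R : Type*} [CommRing R]
    {I J : Ideal R} (h : I ≤ J) :
    Nat.card (R ⧸ I) = Nat.card (R ⧸ J) * Nat.card (J.map (Ideal.Quotient.mk I)) := by
  rw [Submodule.card_eq_card_quotient_mul_card (J.map (Ideal.Quotient.mk I)), mul_comm,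
    Nat.card_congr (DoubleQuot.quotQuotEquivQuotOfLE h).toEquiv]

theorem Ideal.card_ker_powMonoidHom_two_eq_card {S : Type*} [CommRing S] {J : Ideal S}
    (hJ : J * J = ⊥) (h2 : (2 : S) ∈ J) (hsq : ∀ u : S, u ^ 2 = 1 → u - 1 ∈ J) :
    Nat.card (powMonoidHom 2 : Sˣ →* Sˣ).ker = Nat.card J := by
  have hmul_eq_zero {a b : S} (ha : a ∈ J) (hb : b ∈ J) : a * b = 0 := by
    simpa [hJ] using Ideal.mul_mem_mul ha hb
  have hunit {j : S} (hj : j ∈ J) : (1 + j) * (1 + j) = 1 := by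
    linear_combination hmul_eq_zero h2 hj + hmul_eq_zero hj hj
  symm
  exact Nat.card_congr
    { toFun j := ⟨⟨1 + j, 1 + j, hunit j.2, hunit j.2⟩, by ext; simp [sq, hunit j.2]⟩
      invFun u := ⟨u.1 - 1, hsq _ (by simpa using congrArg Units.val (MonoidHom.mem_ker.mp u.2))⟩
      left_inv j := by simp
      right_inv u := by ext; simp }

namespace NumberField.RingOfIntegers

variable (K : Type*) [Field K] [NumberField K]

lemma card_quotient_span_natCast (n : ℕ) :
    Nat.card (𝓞 K ⧸ Ideal.span {(n : 𝓞 K)}) = n ^ Module.finrank ℚ K := by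
  rw [← Submodule.cardQuot_apply, ← Ideal.absNorm_apply, Ideal.absNorm_span_natCast,
    RingOfIntegers.rank]

lemma card_map_span_natCast_quotient_span_natCast_sq {n : ℕ} (hn : n ≠ 0) :
    Nat.card ((Ideal.span {(n : 𝓞 K)}).map
      (Ideal.Quotient.mk (Ideal.span {((n ^ 2 : ℕ) : 𝓞 K)}))) = n ^ Module.finrank ℚ K := by
  have hle : Ideal.span {((n ^ 2 : ℕ) : 𝓞 K)} ≤ Ideal.span {(n : 𝓞 K)} :=
    Ideal.span_singleton_le_span_singleton.mpr (Nat.cast_dvd_cast (dvd_pow_self n two_ne_zero))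
  have hcard := Ideal.card_quotient_eq_card_quotient_mul_card_map hle
  rw [card_quotient_span_natCast, card_quotient_span_natCast, pow_right_comm,
    pow_two (n ^ Module.finrank ℚ K)] at hcard
  exact (Nat.eq_of_mul_eq_mul_left (by positivity) hcard).symm

end NumberField.RingOfIntegers

theorem card_units_quotient_four_mod_squares_general
    (K : Type*) [Field K] [NumberField K]
    (d : ℕ) (hd : d = Module.finrank ℚ K)
    (𝓛 : Ideal (𝓞 K)) (h𝓛 : 𝓛.IsMaximal)
    (hram : Ideal.span {(2 : 𝓞 K)} = 𝓛 ^ d) :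
    Nat.card
      (((𝓞 K) ⧸ Ideal.span {(4 : 𝓞 K)})ˣ ⧸
        (powMonoidHom 2 : ((𝓞 K) ⧸ Ideal.span {(4 : 𝓞 K)})ˣ →*
          ((𝓞 K) ⧸ Ideal.span {(4 : 𝓞 K)})ˣ).range) = 2 ^ d := by
  set I := Ideal.span {(4 : 𝓞 K)}
  set J := (Ideal.span {(2 : 𝓞 K)}).map (Ideal.Quotient.mk I)
  have : Finite (𝓞 K ⧸ I) := Nat.finite_of_card_ne_zero <| by
    simpa using (RingOfIntegers.card_quotient_span_natCast K 4).trans_ne (by positivity)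
  have hJJ : J * J = ⊥ := by
    rw [← Ideal.map_mul, Ideal.span_singleton_mul_span_singleton, Ideal.map_eq_bot_iff_le_ker,
      Ideal.mk_ker, show (2 : 𝓞 K) * 2 = 4 by norm_num]
  have h2J : (2 : 𝓞 K ⧸ I) ∈ J := by
    have := Ideal.mem_map_of_mem (Ideal.Quotient.mk I) (Ideal.mem_span_singleton_self (2 : 𝓞 K))
    rwa [map_ofNat] at this
  have h𝓛bot : 𝓛 ≠ ⊥ := by
    rintro rfl
    rw [Ideal.bot_pow (hd ▸ Module.finrank_pos).ne', Ideal.span_singleton_eq_bot] at hram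
    exact two_ne_zero hram
  have hsq (u : 𝓞 K ⧸ I) (hu : u ^ 2 = 1) : u - 1 ∈ J := by
    obtain ⟨x, rfl⟩ := Ideal.Quotient.mk_surjective u
    rw [← map_pow, ← map_one (Ideal.Quotient.mk I), Ideal.Quotient.eq] at hu
    simpa using Ideal.mem_map_of_mem (Ideal.Quotient.mk I)
      (sub_one_mem_span_two_of_sq_sub_one_mem_span_four ⟨𝓛, h𝓛.isPrime, h𝓛bot⟩ hram hu)
  have hcardJ : Nat.card J = 2 ^ d := by
    have := RingOfIntegers.card_map_span_natCast_quotient_span_natCast_sq K two_ne_zero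
    norm_num at this
    exact hd ▸ this
  rw [← Subgroup.index_eq_card, Subgroup.index_range,
    Ideal.card_ker_powMonoidHom_two_eq_card hJJ h2J hsq, hcardJ]

/-- **Lemma 18 of Kraus' paper.**
Let `K` be a totally real number field of degree `d` over `ℚ` in which `2` is totally
ramified, and let `G = (𝓞 K / 4𝓞 K)ˣ`.  Then the quotient of `G` by its subgroup `G²`
of squares has order `2 ^ d`. -/
theorem card_units_quotient_four_mod_squares
    (K : Type*) [Field K] [NumberField K]
    (htotreal : ∀ φ : K →+* ℂ, ∀ x : K, (φ x).im = 0)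
    (d : ℕ) (hd : d = Module.finrank ℚ K)
    (𝓛 : Ideal (𝓞 K)) (h𝓛 : 𝓛.IsMaximal)
    (hram : Ideal.span {(2 : 𝓞 K)} = 𝓛 ^ d) :
    Nat.card
      (((𝓞 K) ⧸ Ideal.span {(4 : 𝓞 K)})ˣ ⧸
        (powMonoidHom 2 : ((𝓞 K) ⧸ Ideal.span {(4 : 𝓞 K)})ˣ →*
          ((𝓞 K) ⧸ Ideal.span {(4 : 𝓞 K)})ˣ).range) = 2 ^ d :=
  card_units_quotient_four_mod_squares_general K d hd 𝓛 h𝓛 hram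
end

section
/- Let K be a totally real number field of degree d over ℚ in which 2 is totally ramified, with 𝓛 the maximal ideal of O_K above 2. Then the 2-torsion subgroup G[2] = {z ∈ G : z² = 1} of the group G = (O_K/4O_K)ˣ is isomorphic to the additive group 2O_K/4O_K, via the map sending a = 1 + x + 4O_K (with x ∈ 𝓛) to x + 4O_K; in particular G[2] has order 2^d. -/
set_option synthInstance.maxHeartbeats 1000000
open NumberField

/-- The quotient ring `𝓞 K / 4𝓞 K`. -/
abbrev OModFour (K : Type*) [Field K] [NumberField K] : Type _ :=
  (𝓞 K) ⧸ Ideal.span {(4 : 𝓞 K)}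

/-- The `2`-torsion set `G[2]` of the unit group `G = (𝓞 K / 4𝓞 K)ˣ`. -/
abbrev OModFourUnitsTwoTorsion (K : Type*) [Field K] [NumberField K] : Type _ :=
  {z : (OModFour K)ˣ // z * z = 1}

/-- The image `2𝓞 K / 4𝓞 K` of `2𝓞 K` in `𝓞 K / 4𝓞 K`, as a subtype. -/
abbrev TwoOModFour (K : Type*) [Field K] [NumberField K] : Type _ :=
  {y : OModFour K //
    y ∈ Ideal.map (Ideal.Quotient.mk (Ideal.span {(4 : 𝓞 K)})) (Ideal.span {(2 : 𝓞 K)})}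

/-! Write `R = 𝓞 K` and `M = 2R/4R` for the image of `2R` in `R/4R`. Since `M * M = 0` and
`2 ∈ M`, every `1 + y` with `y ∈ M` squares to `1`, and `z ↦ z - 1` turns products of such
elements into sums. Conversely, if `(1 + b)² ≡ 1 mod 4`, then `b² + 2b ∈ 4R = 𝓛^(2d)`; were
`v_𝓛(b) < d`, the term `b²` would have valuation `2 v_𝓛(b) < d + v_𝓛(b) = v_𝓛(2b)`, so
`v_𝓛(b² + 2b) < 2d`. Hence `b ∈ 𝓛^d = 2R`. Finally `M ≅ R/2R` (multiplication by `2`), which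
has `N(2) = 2^d` elements. -/

open IsDedekindDomain

theorem Valuation.le_of_mul_self_add_mul_le {R Γ₀ : Type*} [Ring R]
    [LinearOrderedCommGroupWithZero Γ₀] (V : Valuation R Γ₀) {t b : R} {γ : Γ₀}
    (ht : V t ≤ γ) (h : V (b * b + t * b) ≤ γ * γ) : V b ≤ γ := by
  by_contra! hγ
  have hb : 0 < V b := zero_le.trans_lt hγ
  have hlt : V (t * b) < V (b * b) := by
    rw [map_mul, map_mul]
    exact mul_lt_mul_of_pos_right (ht.trans_lt hγ) hb
  rw [V.map_add_eq_of_lt_left hlt, map_mul] at h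
  exact (mul_lt_mul'' hγ hγ zero_le zero_le).not_ge h

theorem IsDedekindDomain.HeightOneSpectrum.mem_pow_of_mul_self_add_mul_mem_pow {R : Type*}
    [CommRing R] [IsDedekindDomain R] (v : HeightOneSpectrum R) {t b : R} {d : ℕ}
    (ht : t ∈ v.asIdeal ^ d) (hb : b * b + t * b ∈ v.asIdeal ^ (2 * d)) : b ∈ v.asIdeal ^ d := by
  rw [← v.intValuation_le_pow_iff_mem] at ht hb ⊢
  refine v.intValuation.le_of_mul_self_add_mul_le ht ?_
  rwa [← WithZero.exp_add, ← neg_add, ← Nat.cast_add, ← two_mul]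

namespace Ideal

section SquareZero

variable {A : Type*} [CommRing A] {M : Ideal A}

theorem one_add_mul_self_eq_one (hM : M * M = ⊥) (h2 : (2 : A) ∈ M) {y : A} (hy : y ∈ M) :
    (1 + y) * (1 + y) = 1 := by
  have h2y : 2 * y = 0 := by simpa [hM] using mul_mem_mul h2 hy
  have hyy : y * y = 0 := by simpa [hM] using mul_mem_mul hy hy
  linear_combination h2y + hyy

variable (M) in
def unitsMulSelfEqOneEquiv (hM : M * M = ⊥) (h2 : (2 : A) ∈ M)
    (hsub : ∀ z : A, z * z = 1 → z - 1 ∈ M) : {z : Aˣ // z * z = 1} ≃ M where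
  toFun z := ⟨z.1 - 1, hsub z.1 (by rw [← Units.val_mul, z.2, Units.val_one])⟩
  invFun y := ⟨Units.mkOfMulEqOne _ _ (one_add_mul_self_eq_one hM h2 y.2),
    Units.ext (one_add_mul_self_eq_one hM h2 y.2)⟩
  left_inv z := by ext; simp
  right_inv y := by ext; simp

variable (hM : M * M = ⊥) (h2 : (2 : A) ∈ M) (hsub : ∀ z : A, z * z = 1 → z - 1 ∈ M)

@[simp]
theorem coe_unitsMulSelfEqOneEquiv_apply (z : {z : Aˣ // z * z = 1}) :
    (M.unitsMulSelfEqOneEquiv hM h2 hsub z : A) = z.1 - 1 :=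
  rfl

theorem unitsMulSelfEqOneEquiv_mul {z w zw : {z : Aˣ // z * z = 1}} (h : z.1 * w.1 = zw.1) :
    (M.unitsMulSelfEqOneEquiv hM h2 hsub zw : A) =
      M.unitsMulSelfEqOneEquiv hM h2 hsub z + M.unitsMulSelfEqOneEquiv hM h2 hsub w := by
  have hzw : ((z.1 : A) - 1) * (w.1 - 1) = 0 := by
    simpa [hM] using mul_mem_mul (M.unitsMulSelfEqOneEquiv hM h2 hsub z).2
      (M.unitsMulSelfEqOneEquiv hM h2 hsub w).2
  simp only [coe_unitsMulSelfEqOneEquiv_apply, ← h, Units.val_mul]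
  linear_combination hzw

end SquareZero

section TwoModFour

variable (R : Type*) [CommRing R]

def twoModFour : Ideal (R ⧸ span {(4 : R)}) := map (Quotient.mk _) (span {2})

theorem twoModFour_eq_span : twoModFour R = span {2} := by
  rw [twoModFour, map_span, Set.image_singleton, map_ofNat]

theorem twoModFour_mul_self_eq_bot : twoModFour R * twoModFour R = ⊥ := by
  rw [twoModFour, ← Ideal.map_mul, span_singleton_mul_span_singleton, map_eq_bot_iff_le_ker,
    mk_ker]
  norm_num

theorem two_mem_twoModFour : (2 : R ⧸ span {(4 : R)}) ∈ twoModFour R := by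
  rw [twoModFour_eq_span]
  exact mem_span_singleton_self 2

theorem natCard_twoModFour [IsDomain R] (h2 : (2 : R) ≠ 0) :
    Nat.card (twoModFour R) = Nat.card (R ⧸ span {(2 : R)}) := by
  let f := (span {(4 : R)}).mkQ ∘ₗ LinearMap.mulLeft R 2
  have hker : LinearMap.ker f = span {2} := by
    ext a
    simp only [f, LinearMap.mem_ker, LinearMap.coe_comp, Function.comp_apply,
      Submodule.mkQ_apply, LinearMap.mulLeft_apply, Submodule.Quotient.mk_eq_zero,
      mem_span_singleton]
    constructor
    · rintro ⟨c, hc⟩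
      exact ⟨c, mul_left_cancel₀ h2 (by linear_combination hc)⟩
    · rintro ⟨c, rfl⟩
      exact ⟨c, by ring⟩
  have hrange : (twoModFour R).restrictScalars R = LinearMap.range f := by
    ext y
    rw [Submodule.restrictScalars_mem, twoModFour_eq_span, mem_span_singleton',
      LinearMap.mem_range]
    constructor
    · rintro ⟨c, rfl⟩
      obtain ⟨a, rfl⟩ := Quotient.mk_surjective c
      exact ⟨a, by simp [f, map_ofNat, mul_comm]⟩
    · rintro ⟨a, rfl⟩
      exact ⟨Quotient.mk _ a, by simp [f, map_ofNat, mul_comm]⟩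
  change Nat.card ((twoModFour R).restrictScalars R) = _
  rw [hrange, ← hker]
  exact Nat.card_congr f.quotKerEquivRange.toEquiv.symm

theorem sub_one_mem_twoModFour_of_mul_self_eq_one [IsDedekindDomain R]
    (v : HeightOneSpectrum R) {d : ℕ} (hram : span {(2 : R)} = v.asIdeal ^ d)
    {z : R ⧸ span {(4 : R)}} (hz : z * z = 1) : z - 1 ∈ twoModFour R := by
  obtain ⟨a, rfl⟩ := Quotient.mk_surjective z
  have h4 : span {(4 : R)} = v.asIdeal ^ (2 * d) := by
    rw [two_mul, pow_add, ← hram, span_singleton_mul_span_singleton]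
    norm_num
  have hb : (a - 1) * (a - 1) + 2 * (a - 1) ∈ v.asIdeal ^ (2 * d) := by
    rw [← h4, ← Quotient.eq_zero_iff_mem]
    simp only [map_add, map_mul, map_sub, map_one, map_ofNat]
    linear_combination hz
  have ha : a - 1 ∈ span {(2 : R)} := by
    rw [hram]
    exact v.mem_pow_of_mul_self_add_mul_mem_pow (hram ▸ mem_span_singleton_self 2) hb
  have hmem := mem_map_of_mem (Quotient.mk (span {(4 : R)})) ha
  rwa [map_sub, map_one] at hmem

end TwoModFour

end Ideal

theorem two_torsion_of_units_quotient_four_iso_general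
    (K : Type*) [Field K] [NumberField K]
    (d : ℕ) (hd : d = Module.finrank ℚ K)
    (𝓛 : Ideal (𝓞 K)) (h𝓛 : 𝓛.IsMaximal)
    (hram : Ideal.span {(2 : 𝓞 K)} = 𝓛 ^ d) :
    (∃ e : OModFourUnitsTwoTorsion K ≃ TwoOModFour K,
      (∀ z : OModFourUnitsTwoTorsion K,
        ((z.val : (OModFour K)ˣ) : OModFour K) = 1 + (e z).val) ∧
      (∀ z w zw : OModFourUnitsTwoTorsion K, z.val * w.val = zw.val →
        (e zw).val = (e z).val + (e w).val))
    ∧ Nat.card (OModFourUnitsTwoTorsion K) = 2 ^ d := by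
  let v : HeightOneSpectrum (𝓞 K) :=
    ⟨𝓛, h𝓛.isPrime, Ring.ne_bot_of_isMaximal_of_not_isField h𝓛 (RingOfIntegers.not_isField K)⟩
  let e := (Ideal.twoModFour (𝓞 K)).unitsMulSelfEqOneEquiv (Ideal.twoModFour_mul_self_eq_bot _)
    (Ideal.two_mem_twoModFour _) fun z hz ↦
      Ideal.sub_one_mem_twoModFour_of_mul_self_eq_one _ v hram hz
  refine ⟨⟨e, fun z ↦ (add_sub_cancel _ _).symm,
    fun z w zw h ↦ Ideal.unitsMulSelfEqOneEquiv_mul _ _ _ h⟩, ?_⟩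
  rw [Nat.card_congr e, Ideal.natCard_twoModFour _ two_ne_zero, ← Submodule.cardQuot_apply,
    ← Ideal.absNorm_apply]
  simpa [RingOfIntegers.rank, hd] using Ideal.absNorm_span_natCast (S := 𝓞 K) 2

/-- **The key step in the proof of Lemma 18 of Kraus' paper.**
Let `K` be a totally real number field of degree `d` over `ℚ` in which `2` is totally
ramified, with `𝓛` the maximal ideal of `𝓞 K` above `2`.  Then the `2`-torsion
subgroup `G[2] = {z : G | z² = 1}` of `G = (𝓞 K / 4𝓞 K)ˣ` is isomorphic to the
additive group `2𝓞 K / 4𝓞 K`, via the map sending `a = 1 + x + 4𝓞 K` to `x + 4𝓞 K`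
(equivalently, an equivalence `e` with `a = 1 + e a` which carries multiplication to
addition); in particular `G[2]` has order `2 ^ d`. -/
theorem two_torsion_of_units_quotient_four_iso
    (K : Type*) [Field K] [NumberField K]
    (htotreal : ∀ φ : K →+* ℂ, ∀ x : K, (φ x).im = 0)
    (d : ℕ) (hd : d = Module.finrank ℚ K)
    (𝓛 : Ideal (𝓞 K)) (h𝓛 : 𝓛.IsMaximal)
    (hram : Ideal.span {(2 : 𝓞 K)} = 𝓛 ^ d) :
    (∃ e : OModFourUnitsTwoTorsion K ≃ TwoOModFour K,
      (∀ z : OModFourUnitsTwoTorsion K,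
        ((z.val : (OModFour K)ˣ) : OModFour K) = 1 + (e z).val) ∧
      (∀ z w zw : OModFourUnitsTwoTorsion K, z.val * w.val = zw.val →
        (e zw).val = (e z).val + (e w).val))
    ∧ Nat.card (OModFourUnitsTwoTorsion K) = 2 ^ d :=
  two_torsion_of_units_quotient_four_iso_general K d hd 𝓛 h𝓛 hram
end

section
/- Let K be a totally real number field of degree d over ℚ in which 2 is totally ramified. Then the following are equivalent: (1) the class number of K is 1 and the natural reduction homomorphism O_Kˣ → (O_K/4O_K)ˣ is surjective; (2) the class number of K is 1 and every unit of O_K which is congruent to a square modulo 4O_K is a square in O_K. -/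
/-!
Both `(𝓞 K)ˣ` and `G = (𝓞 K ⧸ 4)ˣ` have exactly `2 ^ d` classes modulo squares: the units by
Dirichlet's unit theorem, their torsion being `{±1}`; and `G` because the kernel of squaring on
`G` is `{1 + 2t}`, a copy of `𝓞 K ⧸ 2` (this is where total ramification is used). As `G` is a
`2`-group, the reduction map is onto iff it is onto modulo squares, and by the count this holds
iff it is injective modulo squares, which is condition (2).
-/

open Function NumberField Module

theorem IsPGroup.subsingleton_of_surjective_pow {p : ℕ} {Q : Type*} [Group Q] [Finite Q]
    (hQ : IsPGroup p Q) (hsurj : Surjective fun q : Q ↦ q ^ p) : Subsingleton Q := by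
  have hinj : Injective fun q : Q ↦ q ^ p := Finite.injective_iff_surjective.mpr hsurj
  have key (k : ℕ) : ∀ q : Q, q ^ p ^ k = 1 → q = 1 := by
    induction k with
    | zero => simp
    | succ k ih =>
      intro q hq
      exact ih q (hinj (by simpa [pow_succ, pow_mul] using hq))
  refine ⟨fun a b ↦ ?_⟩
  obtain ⟨k, hk⟩ := hQ a
  obtain ⟨l, hl⟩ := hQ b
  rw [key k a hk, key l b hl]

theorem MonoidHom.surjective_of_isPGroup_of_forall_eq_mul_pow {p : ℕ} {U G : Type*}
    [CommGroup U] [CommGroup G] [Finite G] (hG : IsPGroup p G) (f : U →* G)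
    (h : ∀ g, ∃ u h, g = f u * h ^ p) : Surjective f := by
  have : Subsingleton (G ⧸ f.range) := by
    refine (hG.to_quotient f.range).subsingleton_of_surjective_pow fun q ↦ ?_
    induction q using QuotientGroup.induction_on with | H g => ?_
    obtain ⟨u, h, rfl⟩ := h g
    refine ⟨h, ?_⟩
    simp [QuotientGroup.mk_mul, (QuotientGroup.eq_one_iff (N := f.range) (f u)).mpr ⟨u, rfl⟩]
  exact fun g ↦ (QuotientGroup.eq_one_iff (N := f.range) g).mp (Subsingleton.elim _ _)

/-- As `G` is a `p`-group, `f` is onto iff it is onto modulo `p`-th powers; by the equality of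
indices, that is the same as being injective modulo `p`-th powers. -/
theorem MonoidHom.surjective_iff_of_index_range_pow_eq {p : ℕ} {U G : Type*}
    [CommGroup U] [CommGroup G] [Finite G] (hG : IsPGroup p G) (f : U →* G)
    (hindex : (powMonoidHom p : U →* U).range.index = (powMonoidHom p : G →* G).range.index) :
    Surjective f ↔
      ∀ u, f u ∈ (powMonoidHom p : G →* G).range → u ∈ (powMonoidHom p : U →* U).range := by
  set Up := (powMonoidHom p : U →* U).range
  set Gp := (powMonoidHom p : G →* G).range
  let ψ : U ⧸ Up →* G ⧸ Gp :=
    QuotientGroup.map Up Gp f (by rintro _ ⟨u, rfl⟩; exact ⟨f u, (map_pow f u p).symm⟩)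
  have hcard : Nat.card (U ⧸ Up) = Nat.card (G ⧸ Gp) := hindex
  have hinj : Injective ψ ↔ ∀ u, f u ∈ Gp → u ∈ Up := by
    rw [injective_iff_map_eq_one]
    refine ⟨fun h u hu ↦ ?_, fun h q hq ↦ ?_⟩
    · exact (QuotientGroup.eq_one_iff u).mp (h _ ((QuotientGroup.eq_one_iff _).mpr hu))
    · induction q using QuotientGroup.induction_on with | H u => ?_
      exact (QuotientGroup.eq_one_iff u).mpr (h u ((QuotientGroup.eq_one_iff _).mp hq))
  have hsurj : Surjective ψ ↔ Surjective f := by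
    refine ⟨fun hψ ↦ f.surjective_of_isPGroup_of_forall_eq_mul_pow hG fun g ↦ ?_, fun hf q ↦ ?_⟩
    · obtain ⟨q, hq⟩ := hψ g
      induction q using QuotientGroup.induction_on with | H u => ?_
      obtain ⟨h, hh⟩ := QuotientGroup.eq.mp hq
      exact ⟨u, h, by rw [← powMonoidHom_apply, hh, mul_inv_cancel_left]⟩
    · induction q using QuotientGroup.induction_on with | H g => ?_
      obtain ⟨u, rfl⟩ := hf g
      exact ⟨u, rfl⟩
  rw [← hsurj, ← hinj]
  have : Finite (U ⧸ Up) := Nat.finite_of_card_ne_zero (hcard ▸ Nat.card_pos.ne')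
  exact ⟨fun h ↦ ((Nat.bijective_iff_surjective_and_card ψ).mpr ⟨h, hcard⟩).1,
    fun h ↦ ((Nat.bijective_iff_injective_and_card ψ).mpr ⟨h, hcard⟩).2⟩

theorem Subgroup.index_range_powMonoidHom {G : Type*} [CommGroup G] [Free ℤ (Additive G)]
    [Module.Finite ℤ (Additive G)] (n : ℕ) :
    (powMonoidHom n : G →* G).range.index = n ^ finrank ℤ (Additive G) := by
  rw [← index_toAddSubgroup, ← AddSubgroup.index_range_nsmul]
  rfl

theorem Units.mem_range_powMonoidHom_iff {M : Type*} [CommMonoid M] {n : ℕ} (hn : n ≠ 0)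
    (u : Mˣ) : u ∈ (powMonoidHom n : Mˣ →* Mˣ).range ↔ ∃ w : M, (u : M) = w ^ n := by
  refine ⟨fun ⟨v, hv⟩ ↦ ⟨v, by simp [← hv]⟩, fun ⟨w, hw⟩ ↦ ?_⟩
  have hw' : IsUnit w := (isUnit_pow_iff hn).mp (hw ▸ u.isUnit)
  exact ⟨hw'.unit, Units.ext (by simp [hw])⟩

theorem Prime.pow_succ_dvd_of_pow_dvd_sq {M : Type*} [CommMonoidWithZero M] [IsCancelMulZero M]
    {p a : M} (hp : Prime p) {k : ℕ} (h : p ^ (2 * k + 1) ∣ a ^ 2) : p ^ (k + 1) ∣ a := by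
  have h' := le_emultiplicity_of_pow_dvd h
  rw [emultiplicity_pow hp] at h'
  refine pow_dvd_of_le_emultiplicity ?_
  cases hm : emultiplicity p a with
  | top => exact le_top
  | coe m =>
    rw [hm] at h'
    norm_cast at h' ⊢
    omega

namespace Ideal

variable {R : Type*} [CommRing R]

theorem Quotient.units_map_mk_mem_range_powMonoidHom_iff {I : Ideal R} {n : ℕ} (hn : n ≠ 0)
    (u : Rˣ) :
    Units.map (Quotient.mk I).toMonoidHom u ∈ (powMonoidHom n : (R ⧸ I)ˣ →* (R ⧸ I)ˣ).range ↔
      ∃ w : R, (u : R) - w ^ n ∈ I := by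
  rw [Units.mem_range_powMonoidHom_iff hn, Quotient.mk_surjective.exists]
  simp only [Units.coe_map, MonoidHom.coe_coe, RingHom.toMonoidHom_eq_coe, ← map_pow, Quotient.eq]

theorem sub_one_mem_of_notMem_of_card_quotient_eq_two {L : Ideal R} (hL : Nat.card (R ⧸ L) = 2)
    {x : R} (hx : x ∉ L) : x - 1 ∈ L := by
  obtain ⟨y, hy0, hy⟩ := (Nat.card_eq_two_iff' (0 : R ⧸ L)).mp hL
  have : Nontrivial (R ⧸ L) := ⟨⟨y, 0, hy0⟩⟩
  have hx1 : Quotient.mk L x = 1 :=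
    (hy _ (mt Quotient.eq_zero_iff_mem.mp hx)).trans (hy 1 one_ne_zero).symm
  rw [← Quotient.eq_zero_iff_mem, map_sub, hx1, map_one, sub_self]

theorem two_mem_of_card_quotient_eq_two {L : Ideal R} (hL : Nat.card (R ⧸ L) = 2) :
    (2 : R) ∈ L := by
  have : Finite (R ⧸ L) := Nat.finite_of_card_ne_zero (by omega)
  have : Fintype (R ⧸ L) := Fintype.ofFinite _
  have : Fact (Nat.Prime 2) := ⟨Nat.prime_two⟩
  have : CharP (R ⧸ L) 2 := charP_of_card_eq_prime (by rwa [← Nat.card_eq_fintype_card])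
  rw [← Quotient.eq_zero_iff_mem, map_ofNat]
  exact CharP.ofNat_eq_zero (R ⧸ L) 2

theorem pow_two_pow_sub_one_mem {L : Ideal R} (h2 : (2 : R) ∈ L) {x : R} (hx : x - 1 ∈ L) (k : ℕ) :
    x ^ 2 ^ k - 1 ∈ L ^ (k + 1) := by
  induction k with
  | zero => simpa using hx
  | succ k ih =>
    have hsplit : x ^ 2 ^ (k + 1) - 1 = (x ^ 2 ^ k - 1) * ((x ^ 2 ^ k - 1) + 2) := by ring
    rw [hsplit, pow_succ]
    exact mul_mem_mul ih (add_mem (pow_le_self k.succ_ne_zero ih) h2)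

theorem isPGroup_units_quotient_of_pow_le {L I : Ideal R} (hL : Nat.card (R ⧸ L) = 2) {n : ℕ}
    (hLI : L ^ n ≤ I) (hIL : I ≤ L) : IsPGroup 2 (R ⧸ I)ˣ := by
  intro g
  obtain ⟨x, hx⟩ := Quotient.mk_surjective (g : R ⧸ I)
  obtain ⟨y, hy⟩ := Quotient.mk_surjective (g⁻¹ : (R ⧸ I)ˣ).val
  have hxL : x ∉ L := fun hxL ↦ by
    have hxy : x * y - 1 ∈ I := by
      rw [← Quotient.eq, map_mul, hx, hy, map_one, Units.mul_inv]
    have h1 : (1 : R) ∈ L := by simpa using L.sub_mem (L.mul_mem_right y hxL) (hIL hxy)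
    simp [(eq_top_iff_one L).mpr h1] at hL
  refine ⟨n, Units.ext ?_⟩
  rw [Units.val_pow_eq_pow_val, ← hx, ← map_pow, Units.val_one, ← map_one (Quotient.mk I),
    Quotient.eq]
  exact hLI (pow_le_pow_right n.le_succ
    (pow_two_pow_sub_one_mem (two_mem_of_card_quotient_eq_two hL)
      (sub_one_mem_of_notMem_of_card_quotient_eq_two hL hxL) n))

theorem span_four_eq_pow {L : Ideal R} {d : ℕ} (h2 : span {(2 : R)} = L ^ d) :
    span {(4 : R)} = L ^ (2 * d) := by
  rw [show (4 : R) = 2 ^ 2 by norm_num, ← span_singleton_pow, h2, ← pow_mul, mul_comm]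

theorem card_ker_powMonoidHom_two_units_quotient_span_four [IsDomain R] (h2 : (2 : R) ≠ 0)
    (hsq : ∀ x : R, x ^ 2 - 1 ∈ span {(4 : R)} → x - 1 ∈ span {(2 : R)}) :
    Nat.card (powMonoidHom 2 : (R ⧸ span {(4 : R)})ˣ →* (R ⧸ span {(4 : R)})ˣ).ker =
      Nat.card (R ⧸ span {(2 : R)}) := by
  have hυ (t : R) : Quotient.mk (span {(4 : R)}) (1 + 2 * t) * Quotient.mk _ (1 + 2 * t) = 1 := by
    rw [← map_mul, ← map_one (Quotient.mk _), Quotient.eq]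
    exact mem_span_singleton.mpr ⟨t + t ^ 2, by ring⟩
  let υ (t : R) : (powMonoidHom 2 : (R ⧸ span {(4 : R)})ˣ →* _).ker :=
    ⟨Units.mkOfMulEqOne _ _ (hυ t), Units.ext <| by
      rw [powMonoidHom_apply, sq, Units.val_mul, Units.val_mkOfMulEqOne, hυ t, Units.val_one]⟩
  have hυ_eq (a b : R) : υ a = υ b ↔ a - b ∈ span {(2 : R)} := by
    rw [Subtype.ext_iff, Units.ext_iff, Units.val_mkOfMulEqOne, Units.val_mkOfMulEqOne,
      Quotient.eq, mem_span_singleton, mem_span_singleton]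
    constructor
    · rintro ⟨c, hc⟩
      exact ⟨c, mul_left_cancel₀ h2 (by linear_combination hc)⟩
    · rintro ⟨c, hc⟩
      exact ⟨c, by linear_combination 2 * hc⟩
  let F : R ⧸ span {(2 : R)} → (powMonoidHom 2 : (R ⧸ span {(4 : R)})ˣ →* _).ker :=
    _root_.Quotient.lift υ fun a b hab ↦ (hυ_eq a b).mpr (Submodule.quotientRel_def _ |>.mp hab)
  have hF : Bijective F := by
    refine ⟨fun q q' h ↦ ?_, fun g ↦ ?_⟩
    · induction q using _root_.Quotient.inductionOn with | h a => ?_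
      induction q' using _root_.Quotient.inductionOn with | h b => ?_
      exact _root_.Quotient.sound ((Submodule.quotientRel_def _).mpr ((hυ_eq a b).mp h))
    · obtain ⟨x, hx⟩ := Quotient.mk_surjective (g : (R ⧸ span {(4 : R)})ˣ).val
      have hx2 : x ^ 2 - 1 ∈ span {(4 : R)} := by
        rw [← Quotient.eq, map_pow, hx, map_one, ← Units.val_pow_eq_pow_val,
          ← powMonoidHom_apply, g.2, Units.val_one]
      obtain ⟨t, ht⟩ := mem_span_singleton.mp (hsq x hx2)
      refine ⟨Quotient.mk _ t, Subtype.ext (Units.ext ?_)⟩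
      change Quotient.mk _ (1 + 2 * t) = _
      rw [← hx, ← ht, add_sub_cancel]
  exact (Nat.card_eq_of_bijective F hF).symm

/-- This is where total ramification enters: comparing `L`-adic valuations in
`(x - 1) ^ 2 = (x ^ 2 - 1) - 2 (x - 1)` pushes `x - 1` up to `L ^ d = (2)`. -/
theorem sub_one_mem_span_two_of_sq_sub_one_mem_span_four [IsDedekindDomain R] {L : Ideal R}
    (hL : Prime L) {d : ℕ} (h2 : span {(2 : R)} = L ^ d) {x : R}
    (hx : x ^ 2 - 1 ∈ span {(4 : R)}) : x - 1 ∈ span {(2 : R)} := by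
  suffices ∀ k ≤ d, x - 1 ∈ L ^ k from h2 ▸ this d le_rfl
  intro k
  induction k with
  | zero => simp
  | succ k ih =>
    intro hk
    have hy : x - 1 ∈ L ^ k := ih (by omega)
    have h2y : 2 * (x - 1) ∈ L ^ (d + k) :=
      pow_add L d k ▸ mul_mem_mul (h2 ▸ mem_span_singleton_self 2) hy
    have hsq : (x - 1) ^ 2 ∈ L ^ (2 * k + 1) := by
      rw [show (x - 1) ^ 2 = (x ^ 2 - 1) - 2 * (x - 1) by ring]
      exact sub_mem (pow_le_pow_right (by omega) (span_four_eq_pow h2 ▸ hx))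
        (pow_le_pow_right (by omega) h2y)
    rw [← dvd_span_singleton, ← span_singleton_pow] at hsq
    rw [← dvd_span_singleton]
    exact hL.pow_succ_dvd_of_pow_dvd_sq hsq

end Ideal

namespace NumberField

theorem isTotallyReal_of_forall_im_eq_zero {K : Type*} [Field K]
    (h : ∀ φ : K →+* ℂ, ∀ x : K, (φ x).im = 0) :
    IsTotallyReal K where
  isReal w := by
    rw [InfinitePlace.isReal_iff, ComplexEmbedding.isReal_iff]
    ext x
    exact Complex.conj_eq_iff_im.mpr (h _ x)

variable {K : Type*} [Field K] [NumberField K]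

theorem card_quotient_span_natCast (n : ℕ) :
    Nat.card (𝓞 K ⧸ Ideal.span {(n : 𝓞 K)}) = n ^ finrank ℚ K := by
  rw [← Submodule.cardQuot_apply, ← Ideal.absNorm_apply, Ideal.absNorm_span_natCast,
    RingOfIntegers.rank]

theorem card_quotient_eq_two_of_span_two_eq_pow {L : Ideal (𝓞 K)}
    (hL : Ideal.span {(2 : 𝓞 K)} = L ^ finrank ℚ K) : Nat.card (𝓞 K ⧸ L) = 2 := by
  have h : Ideal.absNorm L ^ finrank ℚ K = 2 ^ finrank ℚ K := by
    rw [← map_pow, ← hL, Ideal.absNorm_apply, Submodule.cardQuot_apply]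
    exact_mod_cast card_quotient_span_natCast 2
  rw [← Submodule.cardQuot_apply, ← Ideal.absNorm_apply]
  exact Nat.pow_left_injective finrank_pos.ne' h

namespace Units

variable [IsTotallyReal K]

theorem rank_add_one_of_isTotallyReal : rank K + 1 = finrank ℚ K := by
  rw [rank, InfinitePlace.card_eq_nrRealPlaces_add_nrComplexPlaces,
    IsTotallyReal.nrComplexPlaces_eq_zero, add_zero, ← IsTotallyReal.finrank]
  exact Nat.sub_add_cancel finrank_pos

theorem torsion_eq_one_or_neg_one_of_isTotallyReal {ζ : (𝓞 K)ˣ} (hζ : ζ ∈ torsion K) :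
    ζ = 1 ∨ ζ = -1 := by
  obtain ⟨w⟩ : Nonempty (InfinitePlace K) := inferInstance
  let φ := w.embedding_of_isReal (IsTotallyReal.isReal w)
  obtain ⟨n, hn, hζn⟩ := isOfFinOrder_iff_pow_eq_one.mp hζ
  have hφ : φ ζ ^ n = 1 := by rw [← map_pow, ← coe_pow, hζn, coe_one, map_one]
  rcases (pow_eq_one_iff_of_ne_zero hn.ne').mp hφ with h | ⟨h, -⟩
  · exact .inl (coe_injective K (φ.injective (by simpa using h)))
  · exact .inr (coe_injective K (φ.injective (by simpa using h)))

theorem card_torsion_of_isTotallyReal : Nat.card (torsion K) = 2 := by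
  rw [Nat.card_eq_two_iff' 1]
  refine ⟨⟨-1, neg_one_mem_torsion⟩, fun h ↦ ?_, fun ζ hζ ↦ ?_⟩
  · have := congrArg (fun ζ : torsion K ↦ ((ζ : (𝓞 K)ˣ) : K)) h
    norm_num at this
  · refine Subtype.ext ((torsion_eq_one_or_neg_one_of_isTotallyReal ζ.2).resolve_left ?_)
    exact fun h ↦ hζ (Subtype.ext h)

/-- The squares meet the torsion `T = {±1}` trivially, so
`[U : U²] = |T| · [U/T : (U/T)²] = 2 · 2 ^ rank`. -/
theorem index_range_powMonoidHom_two_of_isTotallyReal :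
    (powMonoidHom 2 : (𝓞 K)ˣ →* (𝓞 K)ˣ).range.index = 2 ^ finrank ℚ K := by
  set Sq := (powMonoidHom 2 : (𝓞 K)ˣ →* (𝓞 K)ˣ).range
  let π := QuotientGroup.mk' (torsion K)
  have hdisj : Sq ⊓ torsion K = ⊥ := by
    rw [eq_bot_iff]
    rintro _ ⟨⟨u, rfl⟩, hu⟩
    have hu' : u ∈ torsion K := IsOfFinOrder.of_pow hu two_ne_zero
    rcases torsion_eq_one_or_neg_one_of_isTotallyReal hu' with rfl | rfl <;> simp
  have hmap : Sq.map π = (powMonoidHom (α := (𝓞 K)ˣ ⧸ torsion K) 2).range := by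
    ext q
    constructor
    · rintro ⟨_, ⟨u, rfl⟩, rfl⟩
      exact ⟨π u, (map_pow π u 2).symm⟩
    · rintro ⟨q, rfl⟩
      induction q using QuotientGroup.induction_on with | H u => ?_
      exact ⟨u ^ 2, ⟨u, rfl⟩, map_pow π u 2⟩
  have hsup : (Sq ⊔ torsion K).index = 2 ^ rank K := by
    have := Subgroup.index_map Sq π
    rw [QuotientGroup.ker_mk', QuotientGroup.range_mk', Subgroup.index_top, mul_one, hmap,
      Subgroup.index_range_powMonoidHom, finrank_modTorsion] at this
    exact this.symm
  rw [← Subgroup.relIndex_mul_index (le_sup_left : Sq ≤ Sq ⊔ torsion K),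
    Subgroup.relIndex_sup_left, ← Subgroup.inf_relIndex_right, hdisj, Subgroup.relIndex_bot_left,
    card_torsion_of_isTotallyReal, hsup, ← rank_add_one_of_isTotallyReal, pow_succ']

end Units

end NumberField

/-- **Lemma 19 of Kraus' paper (through Lemma 16).**
Let `K` be a totally real number field of degree `d` over `ℚ` in which `2` is totally
ramified.  The following are equivalent:
(1) the class number of `K` is `1` and the reduction map `(𝓞 K)ˣ → (𝓞 K / 4𝓞 K)ˣ` is
surjective (i.e. `K = K^{4𝓞 K}`);
(2) the class number of `K` is `1` and every unit of `𝓞 K` congruent to a square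
modulo `4𝓞 K` is a square in `𝓞 K`. -/
theorem class_number_one_and_units_surjective_iff_units_congruent_to_squares_are_squares
    (K : Type*) [Field K] [NumberField K]
    (htotreal : ∀ φ : K →+* ℂ, ∀ x : K, (φ x).im = 0)
    (d : ℕ) (hd : d = Module.finrank ℚ K)
    (𝓛 : Ideal (𝓞 K)) (h𝓛 : 𝓛.IsMaximal)
    (hram : Ideal.span {(2 : 𝓞 K)} = 𝓛 ^ d) :
    (NumberField.classNumber K = 1 ∧
      Function.Surjective
        (Units.map (Ideal.Quotient.mk (Ideal.span {(4 : 𝓞 K)})).toMonoidHom :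
          (𝓞 K)ˣ → ((𝓞 K) ⧸ Ideal.span {(4 : 𝓞 K)})ˣ))
    ↔
    (NumberField.classNumber K = 1 ∧
      ∀ u : (𝓞 K)ˣ,
        (∃ w : 𝓞 K, (u : 𝓞 K) - w ^ 2 ∈ Ideal.span {(4 : 𝓞 K)}) →
        ∃ w : 𝓞 K, (u : 𝓞 K) = w ^ 2) := by
  subst hd
  have : IsTotallyReal K := isTotallyReal_of_forall_im_eq_zero htotreal
  have : Finite (𝓞 K ⧸ Ideal.span {(4 : 𝓞 K)}) := Nat.finite_of_card_ne_zero <| by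
    exact_mod_cast (card_quotient_span_natCast (K := K) 4).trans_ne (by positivity)
  have h4 := Ideal.span_four_eq_pow hram
  have hG := Ideal.isPGroup_units_quotient_of_pow_le (card_quotient_eq_two_of_span_two_eq_pow hram)
    h4.ge (h4.le.trans (Ideal.pow_le_self (mul_pos two_pos finrank_pos).ne'))
  have h𝓛0 : 𝓛 ≠ ⊥ := Ring.ne_bot_of_isMaximal_of_not_isField h𝓛 (RingOfIntegers.not_isField K)
  have hindex : (powMonoidHom 2 : (𝓞 K ⧸ Ideal.span {(4 : 𝓞 K)})ˣ →* _).range.index =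
      2 ^ finrank ℚ K := by
    rw [Subgroup.index_range, Ideal.card_ker_powMonoidHom_two_units_quotient_span_four two_ne_zero
      fun x ↦ Ideal.sub_one_mem_span_two_of_sq_sub_one_mem_span_four
        (Ideal.prime_of_isPrime h𝓛0 h𝓛.isPrime) hram]
    exact_mod_cast card_quotient_span_natCast 2
  refine and_congr_right fun _ ↦ ?_
  rw [MonoidHom.surjective_iff_of_index_range_pow_eq hG _
    (Units.index_range_powMonoidHom_two_of_isTotallyReal.trans hindex.symm)]
  simp only [Ideal.Quotient.units_map_mk_mem_range_powMonoidHom_iff two_ne_zero,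
    Units.mem_range_powMonoidHom_iff two_ne_zero]
end
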